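/- Suppose there exists a generalized Steiner system GS(t,w,n,q) with q ≥ 3 and 1 ≤ t ≤ w ≤ n. Then every set A of words of length n and weight w over Fin q in which any two members have Hamming distance at most 2(w−t) satisfies |A| ≤ C(n−t, w−t) · (q−1)^{w−t}. -/

import Mathlib

/-- The weight of a word `x : Fin n → Fin q`: the number of nonzero coordinates. -/
def wt {n q : ℕ} (x : Fin n → Fin q) : ℕ :=
  (Finset.univ.filter fun i => (x i : ℕ) ≠ 0).card

/-- `C` is a generalized Steiner system GS(t,w,n,q): a constant-weight code of
length `n` and weight `w` over `Fin q` with minimum Hamming distance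
`2(w-t)+1`, such that every word of length `n` and weight `t` is at Hamming
distance exactly `w - t` from exactly one codeword. -/
def IsGS (t w n q : ℕ) (C : Finset (Fin n → Fin q)) : Prop :=
  (∀ c ∈ C, wt c = w) ∧
  (∀ c₁ ∈ C, ∀ c₂ ∈ C, c₁ ≠ c₂ → 2 * (w - t) + 1 ≤ hammingDist c₁ c₂) ∧
  (∀ x : Fin n → Fin q, wt x = t → ∃! c, c ∈ C ∧ hammingDist x c = w - t)

/-!
A word `x` of weight `t` is at distance `w - t` from a word `c` of weight `w` exactly when `c`
covers `x`, i.e. agrees with it on its support. Counting the covered pairs of a GS(t,w,n,q) code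
`C` gives `#C * C(w,t) = C(n,t) (q-1)^t`.

The zero-fixing isometries of the Hamming space act transitively on the words of weight `w`, so
every pair `(a, c)` of such words is matched by the same number of isometries. An isometry maps at
most one word of the anticode `A` into `C`, since two images would lie at distance
`≤ 2(w-t) < 2(w-t)+1`. Averaging over the group gives the code–anticode bound
`#A * #C ≤ C(n,w) (q-1)^w`, and `C(n,w) C(w,t) = C(n,t) C(n-t,w-t)` finishes the proof.
-/

open Finset Equiv

section Words

variable {ι β : Type*} [Fintype ι] [Zero β] [DecidableEq β]

def supp (x : ι → β) : Finset ι := {i | x i ≠ 0}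

@[simp] lemma mem_supp {x : ι → β} {i : ι} : i ∈ supp x ↔ x i ≠ 0 := by
  simp [supp]

lemma card_supp (x : ι → β) : #(supp x) = hammingNorm x := rfl

def Covers (c x : ι → β) : Prop := ∀ i, x i ≠ 0 → c i = x i

lemma Covers.supp_subset {c x : ι → β} (h : Covers c x) : supp x ⊆ supp c := fun i hi => by
  rw [mem_supp] at hi ⊢
  rwa [h i hi]

lemma hammingDist_eq_hammingNorm_sub_iff_covers {x c : ι → β} :
    hammingDist x c = hammingNorm c - hammingNorm x ↔ Covers c x := by
  classical
  set E : Finset ι := {i ∈ supp x | c i = x i}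
  have hE : E ⊆ supp x := filter_subset _ _
  set D : Finset ι := {i | x i ≠ c i}
  have hdist : hammingDist x c = #D := rfl
  constructor
  · intro hd
    -- Off the agreement set `E`, all of `supp c` and of `supp x` lies in `D`, so
    -- `#D ≥ max (#supp c) (#supp x) - #E`, and `#D = #supp c - #supp x` forces `E = supp x`.
    have hc : supp c \ E ⊆ D := fun i hi => by
      by_cases hx : x i = 0 <;> simp_all [E, D, eq_comm]
    have hx : supp x \ E ⊆ D := fun i hi => by
      simp_all [E, D, eq_comm]
    have := le_card_sdiff E (supp c)
    have := card_sdiff_of_subset hE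
    have := card_le_card hc
    have := card_le_card hx
    have := card_le_card hE
    have hEx : E = supp x := eq_of_subset_of_card_le hE (by simp only [card_supp] at *; omega)
    intro i hi
    exact (mem_filter.1 (hEx ▸ mem_supp.2 hi : i ∈ E)).2
  · intro h
    have hD : D = supp c \ supp x := by
      ext i
      by_cases hx : x i = 0 <;> simp_all [D, h i, eq_comm]
    rw [hdist, hD, card_sdiff_of_subset h.supp_subset, card_supp, card_supp]

instance (c x : ι → β) : Decidable (Covers c x) :=
  Fintype.decidableForallFintype

variable [DecidableEq ι] [Fintype β]

lemma card_filter_covers (c : ι → β) (t : ℕ) :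
    #{x : ι → β | hammingNorm x = t ∧ Covers c x} = (hammingNorm c).choose t := by
  rw [← card_supp, ← card_powersetCard]
  refine card_nbij' supp (fun s => s.piecewise c 0) ?_ ?_ ?_ ?_
  · intro x hx
    simp only [coe_filter, mem_univ, true_and] at hx
    simpa [mem_powersetCard, card_supp, hx.1] using hx.2.supp_subset
  · intro s hs
    rw [mem_coe, mem_powersetCard] at hs
    have hsupp : supp (s.piecewise c 0) = s := by
      ext i
      by_cases hi : i ∈ s
      · simpa [hi] using hs.1 hi
      · simp [hi]
    have hcov : Covers c (s.piecewise c 0) := fun i hi => by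
      by_cases hs : i ∈ s <;> simp_all
    simp only [coe_filter, mem_univ, true_and, Set.mem_ofPred, hcov, and_true]
    rw [← card_supp, hsupp, hs.2]
  · intro x hx
    simp only [coe_filter, mem_univ, true_and, Set.mem_ofPred] at hx
    ext i
    by_cases hi : x i = 0 <;> simp [hi, hx.2 i]
  · intro s hs
    rw [mem_coe, mem_powersetCard] at hs
    ext i
    by_cases hi : i ∈ s
    · simpa [hi] using hs.1 hi
    · simp [hi]

lemma card_filter_supp_eq (s : Finset ι) :
    #{x : ι → β | supp x = s} = (Fintype.card β - 1) ^ #s := by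
  have : ({x : ι → β | supp x = s} : Finset _) =
      Fintype.piFinset fun i => if i ∈ s then {0}ᶜ else {0} := by
    ext x
    simp only [mem_filter, mem_univ, true_and, Fintype.mem_piFinset, Finset.ext_iff, mem_supp]
    refine forall_congr' fun i => ?_
    by_cases hi : i ∈ s <;> simp [hi]
  simp only [this, Fintype.card_piFinset, apply_ite card, card_compl, card_singleton,
    Fintype.prod_ite_mem, prod_const]

lemma card_filter_hammingNorm_eq (k : ℕ) :
    #{x : ι → β | hammingNorm x = k} = (Fintype.card ι).choose k * (Fintype.card β - 1) ^ k := by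
  rw [card_eq_sum_card_fiberwise (f := supp) (t := powersetCard k univ), ← card_univ,
    ← card_powersetCard, ← smul_eq_mul, ← sum_const]
  · refine sum_congr rfl fun s hs => ?_
    rw [mem_powersetCard] at hs
    rw [filter_filter, ← hs.2, ← card_filter_supp_eq]
    congr 1
    refine filter_congr fun x _ => and_iff_right_of_imp fun hx => ?_
    rw [← card_supp, hx]
  · intro x hx
    simp_all [card_supp]

end Words

section CodeAnticode

variable {G α : Type*} [Group G] [Fintype G] [MulAction G α] [DecidableEq α]

lemma card_filter_smul_eq_eq_of_smul_eq {x y x' y' : α} {h₁ h₂ : G}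
    (hx : h₁ • x = x') (hy : h₂ • y = y') :
    #{g : G | g • x = y} = #{g : G | g • x' = y'} := by
  refine card_nbij' (fun g => h₂ * g * h₁⁻¹) (fun g => h₂⁻¹ * g * h₁) ?_ ?_ ?_ ?_
  · intro g hg
    simp_all [mul_smul, ← hx, ← hy]
  · intro g hg
    simp_all [mul_smul, ← hx, ← hy]
  · intro g _
    simp [mul_assoc]
  · intro g _
    simp [mul_assoc]

theorem card_mul_card_le_card_of_transitive {A C W : Finset α}
    (hW : ∀ g : G, ∀ x ∈ W, g • x ∈ W) (htrans : ∀ x ∈ W, ∀ y ∈ W, ∃ g : G, g • x = y)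
    (hA : A ⊆ W) (hC : C ⊆ W)
    (hAC : ∀ g : G, ∀ a₁ ∈ A, ∀ a₂ ∈ A, g • a₁ ∈ C → g • a₂ ∈ C → a₁ = a₂) :
    #A * #C ≤ #W := by
  obtain rfl | ⟨x₀, hx₀⟩ := A.eq_empty_or_nonempty
  · simp
  have hx₀W := hA hx₀
  -- Every pair of points of `W` is matched by exactly `K = #G / #W` group elements.
  set K := #{g : G | g • x₀ = x₀}
  have hK : ∀ x ∈ W, ∀ y ∈ W, #{g : G | g • x = y} = K := fun x hx y hy => by
    obtain ⟨h₁, rfl⟩ := htrans x₀ hx₀W x hx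
    obtain ⟨h₂, rfl⟩ := htrans x₀ hx₀W y hy
    exact (card_filter_smul_eq_eq_of_smul_eq (x := h₁ • x₀) (h₁ := h₁⁻¹) (h₂ := h₂⁻¹)
      (by simp) (by simp))
  have hKpos : 0 < K := card_pos.2 ⟨1, by simp⟩
  have hcardG : #(univ : Finset G) = #W * K := by
    rw [card_eq_sum_card_fiberwise (f := (· • x₀)) (t := W)
      fun g _ => hW g x₀ hx₀W, sum_congr rfl fun y hy => hK x₀ hx₀W y hy, sum_const, smul_eq_mul]
  have hpairs : #(A ×ˢ C) * K ≤ #(univ : Finset G) * 1 := by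
    refine card_mul_le_card_mul (fun p g => g • p.1 = p.2) (fun p hp => ?_) (fun g _ => ?_)
    · rw [mem_product] at hp
      exact (hK _ (hA hp.1) _ (hC hp.2)).ge
    · refine card_le_one.2 fun p hp p' hp' => ?_
      simp only [mem_bipartiteBelow, mem_product] at hp hp'
      have h := hAC g _ hp.1.1 _ hp'.1.1 (hp.2 ▸ hp.1.2) (hp'.2 ▸ hp'.1.2)
      exact Prod.ext h (by rw [← hp.2, ← hp'.2, h])
  rw [card_product, mul_one, hcardG] at hpairs
  exact le_of_mul_le_mul_right hpairs hKpos

end CodeAnticode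

section Isometries

lemma hammingDist_comp_equiv {ι κ β : Type*} [Fintype ι] [Fintype κ] [DecidableEq β]
    (σ : κ ≃ ι) (x y : ι → β) : hammingDist (x ∘ σ) (y ∘ σ) = hammingDist x y :=
  card_equiv σ (by simp)

variable {ι β : Type*} [Fintype ι] [Zero β] [DecidableEq β]

variable (ι β) in
def zeroFixingIsometries : Subgroup (Perm (ι → β)) where
  carrier := {e | e 0 = 0 ∧ ∀ x y, hammingDist (e x) (e y) = hammingDist x y}
  one_mem' := ⟨rfl, fun _ _ => rfl⟩
  mul_mem' := fun {e f} he hf => ⟨by simp [hf.1, he.1], fun x y => by simp [he.2, hf.2]⟩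
  inv_mem' := fun {e} he => ⟨by rw [Perm.inv_eq_iff_eq, he.1], fun x y => by
    simpa using (he.2 (e⁻¹ x) (e⁻¹ y)).symm⟩

lemma hammingNorm_apply_of_mem_zeroFixingIsometries {e : Perm (ι → β)}
    (he : e ∈ zeroFixingIsometries ι β) (x : ι → β) : hammingNorm (e x) = hammingNorm x := by
  rw [← hammingDist_zero_right, ← hammingDist_zero_right, ← he.2 x 0, he.1]

lemma arrowCongr_mem_zeroFixingIsometries (σ : Perm ι) :
    σ.arrowCongr (Equiv.refl β) ∈ zeroFixingIsometries ι β :=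
  ⟨rfl, fun _ _ => hammingDist_comp_equiv σ.symm _ _⟩

lemma piCongrRight_mem_zeroFixingIsometries {π : ι → Perm β} (hπ : ∀ i, π i 0 = 0) :
    piCongrRight π ∈ zeroFixingIsometries ι β :=
  ⟨funext hπ, fun _ _ => hammingDist_comp _ fun i => (π i).injective⟩

lemma exists_perm_apply_mem_iff [DecidableEq ι] {s t : Finset ι} (h : #s = #t) :
    ∃ σ : Perm ι, ∀ i, σ i ∈ t ↔ i ∈ s := by
  let e : {i // i ∈ s} ≃ {i // i ∈ t} := Fintype.equivOfCardEq (by simpa using h)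
  exact ⟨e.extendSubtype, fun i =>
    ⟨fun hi => by_contra fun hs => e.extendSubtype_not_mem i hs hi, e.extendSubtype_mem i⟩⟩

/-- Permute the coordinates to align the supports, then swap symbols coordinatewise. -/
lemma exists_mem_zeroFixingIsometries_apply_eq [DecidableEq ι] {a c : ι → β}
    (h : hammingNorm a = hammingNorm c) :
    ∃ e ∈ zeroFixingIsometries ι β, e a = c := by
  obtain ⟨σ, hσ⟩ := exists_perm_apply_mem_iff (s := supp a) (t := supp c) h
  set a' := σ.arrowCongr (Equiv.refl β) a
  have ha' : ∀ i, a' i = 0 ↔ c i = 0 := fun i => by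
    simpa [a', not_iff_not] using (hσ (σ.symm i)).symm
  let π : ι → Perm β := fun i => swap (a' i) (c i)
  have hπ : ∀ i, π i 0 = 0 := fun i => by
    by_cases hc : c i = 0
    · simp [π, hc, (ha' i).2 hc]
    · exact swap_apply_of_ne_of_ne (Ne.symm (mt (ha' i).1 hc)) (Ne.symm hc)
  refine ⟨piCongrRight π * σ.arrowCongr (Equiv.refl β),
    mul_mem (piCongrRight_mem_zeroFixingIsometries hπ) (arrowCongr_mem_zeroFixingIsometries σ),
    funext fun i => swap_apply_left _ _⟩

lemma card_mul_card_le_of_hammingDist_lt [DecidableEq ι] [Fintype β] {k d : ℕ}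
    {A C : Finset (ι → β)} (hA : ∀ a ∈ A, hammingNorm a = k) (hC : ∀ c ∈ C, hammingNorm c = k)
    (hAdiam : ∀ a₁ ∈ A, ∀ a₂ ∈ A, hammingDist a₁ a₂ ≤ d)
    (hCdist : ∀ c₁ ∈ C, ∀ c₂ ∈ C, c₁ ≠ c₂ → d < hammingDist c₁ c₂) :
    #A * #C ≤ #{x : ι → β | hammingNorm x = k} := by
  classical
  refine card_mul_card_le_card_of_transitive (G := zeroFixingIsometries ι β)
    ?_ ?_ (fun a ha => by simp [hA a ha]) (fun c hc => by simp [hC c hc]) ?_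
  · intro g x hx
    simp_all [Subgroup.smul_def, Perm.smul_def, hammingNorm_apply_of_mem_zeroFixingIsometries g.2]
  · intro x hx y hy
    simp only [mem_filter, mem_univ, true_and] at hx hy
    obtain ⟨e, he, rfl⟩ := exists_mem_zeroFixingIsometries_apply_eq (hx.trans hy.symm)
    exact ⟨⟨e, he⟩, rfl⟩
  · intro g a₁ h₁ a₂ h₂ hc₁ hc₂
    by_contra hne
    have hfar := hCdist _ hc₁ _ hc₂ ((MulAction.injective g).ne hne)
    rw [Subgroup.smul_def, Subgroup.smul_def, Perm.smul_def, Perm.smul_def, g.2.2] at hfar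
    exact (hAdiam a₁ h₁ a₂ h₂).not_gt hfar

end Isometries

lemma wt_eq_hammingNorm {n q : ℕ} [NeZero q] (x : Fin n → Fin q) : wt x = hammingNorm x := by
  simp [wt, hammingNorm]

lemma card_filter_wt_eq {n q : ℕ} [NeZero q] (k : ℕ) :
    #{x : Fin n → Fin q | wt x = k} = n.choose k * (q - 1) ^ k := by
  simpa [wt_eq_hammingNorm] using card_filter_hammingNorm_eq (ι := Fin n) (β := Fin q) k

namespace IsGS

variable {t w n q : ℕ} [NeZero q] {C : Finset (Fin n → Fin q)}

lemma hammingDist_eq_sub_iff_covers (hC : IsGS t w n q C) {x c : Fin n → Fin q}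
    (hx : wt x = t) (hc : c ∈ C) : hammingDist x c = w - t ↔ Covers c x := by
  rw [← hC.1 c hc, ← hx, wt_eq_hammingNorm, wt_eq_hammingNorm,
    hammingDist_eq_hammingNorm_sub_iff_covers]

lemma card_mul_choose (hC : IsGS t w n q C) :
    #C * w.choose t = #{x : Fin n → Fin q | wt x = t} := by
  have h := card_mul_eq_card_mul (fun x c => Covers c x) (s := {x : Fin n → Fin q | wt x = t})
    (t := C) (m := 1) (n := w.choose t) ?_ ?_
  · rw [mul_one] at h
    exact h.symm
  · intro x hx
    rw [mem_filter] at hx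
    obtain ⟨c, ⟨hc, hxc⟩, huniq⟩ := hC.2.2 x hx.2
    refine card_eq_one.2 ⟨c, ext fun c' => ?_⟩
    simp only [mem_bipartiteAbove, mem_singleton]
    constructor
    · intro h
      exact huniq c' ⟨h.1, (hC.hammingDist_eq_sub_iff_covers hx.2 h.1).2 h.2⟩
    · rintro rfl
      exact ⟨hc, (hC.hammingDist_eq_sub_iff_covers hx.2 hc).1 hxc⟩
  · intro c hc
    rw [bipartiteBelow, filter_filter, ← hC.1 c hc, wt_eq_hammingNorm, ← card_filter_covers c t]
    simp only [wt_eq_hammingNorm]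

lemma card_mul_card_le_of_anticode (hC : IsGS t w n q C) {A : Finset (Fin n → Fin q)}
    (hA : ∀ a ∈ A, wt a = w) (hAdiam : ∀ a₁ ∈ A, ∀ a₂ ∈ A, hammingDist a₁ a₂ ≤ 2 * (w - t)) :
    #A * #C ≤ #{x : Fin n → Fin q | wt x = w} := by
  simp only [wt_eq_hammingNorm] at hA ⊢
  exact card_mul_card_le_of_hammingDist_lt hA (fun c hc => (wt_eq_hammingNorm c).symm.trans
    (hC.1 c hc)) hAdiam fun c₁ h₁ c₂ h₂ hne => hC.2.1 c₁ h₁ c₂ h₂ hne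

end IsGS

theorem gs_max_anticode_general (t w n q : ℕ) (hq : 3 ≤ q) (htw : t ≤ w)
    (hw : w ≤ n) (h : ∃ C : Finset (Fin n → Fin q), IsGS t w n q C)
    (A : Finset (Fin n → Fin q)) (hA : ∀ a ∈ A, wt a = w)
    (hAdiam : ∀ a₁ ∈ A, ∀ a₂ ∈ A, hammingDist a₁ a₂ ≤ 2 * (w - t)) :
    A.card ≤ Nat.choose (n - t) (w - t) * (q - 1) ^ (w - t) := by
  have : NeZero q := ⟨by omega⟩
  obtain ⟨C, hC⟩ := h
  have hcover : #C * w.choose t = n.choose t * (q - 1) ^ t := by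
    rw [hC.card_mul_choose, card_filter_wt_eq]
  have hanticode : #A * #C ≤ n.choose w * (q - 1) ^ w := by
    rw [← card_filter_wt_eq]
    exact hC.card_mul_card_le_of_anticode hA hAdiam
  have hpos : 0 < n.choose t * (q - 1) ^ t :=
    Nat.mul_pos (Nat.choose_pos (htw.trans hw)) (pow_pos (by omega) _)
  refine le_of_mul_le_mul_left ?_ hpos
  calc n.choose t * (q - 1) ^ t * #A = #A * #C * w.choose t := by rw [← hcover]; ring
    _ ≤ n.choose w * (q - 1) ^ w * w.choose t := by gcongr
    _ = n.choose t * (q - 1) ^ t * ((n - t).choose (w - t) * (q - 1) ^ (w - t)) := by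
      rw [mul_right_comm, Nat.choose_mul htw, ← pow_sub_mul_pow (q - 1) htw]
      ring

/-- If a generalized Steiner system GS(t,w,n,q) exists, then every anticode of
words of length `n` and weight `w` over `Fin q` with Hamming diameter at most
`2(w-t)` has size at most `C(n-t, w-t) * (q-1)^(w-t)`. -/
theorem gs_max_anticode (t w n q : ℕ) (hq : 3 ≤ q) (ht : 1 ≤ t) (htw : t ≤ w)
    (hw : w ≤ n) (h : ∃ C : Finset (Fin n → Fin q), IsGS t w n q C)
    (A : Finset (Fin n → Fin q)) (hA : ∀ a ∈ A, wt a = w)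
    (hAdiam : ∀ a₁ ∈ A, ∀ a₂ ∈ A, hammingDist a₁ a₂ ≤ 2 * (w - t)) :
    A.card ≤ Nat.choose (n - t) (w - t) * (q - 1) ^ (w - t) :=
  gs_max_anticode_general t w n q hq htw hw h A hA hAdiam
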